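/- Let U ⊆ ℂ be open, C > 0 a real constant, φ : U → ℝ a real-differentiable function with |φ(z)| < C on U, and F : U → ℂ nonvanishing, such that ∂_zφ(z) = (C² − φ(z)²)/F(z) for all z ∈ U. Define h : U → ℝ by h = (1/(2C))·log((C + φ)/(C − φ)). Then for all z ∈ U one has ∂_z h(z) = 1/F(z) and ∂_z̄ h(z) = 1/conj(F(z)); consequently dh = 2Re(dz/F), i.e. the real part of the one-form dz/F is exact on U with primitive h. -/

import Mathlib

/-!
`h = g ∘ φ` with `g t = (1/(2C)) log((C + t)/(C - t))`, and `g' t = 1/(C² - t²)`. For real-valued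
functions the Wirtinger derivative `∂_z` obeys the one-variable chain rule, so
`∂_z h = g'(φ) ∂_z φ = 1/F`; and `∂_z̄ h = conj (∂_z h)` because `h` is real.
-/

/-- The Wirtinger derivative `∂_z = ½(∂/∂x - i ∂/∂y)` of a complex-valued function on
`ℂ ≃ ℝ²`, computed via the real Fréchet derivative. -/
noncomputable def dzW (φ : ℂ → ℂ) (z : ℂ) : ℂ :=
  (1 / 2 : ℂ) * (fderiv ℝ φ z 1 - Complex.I * fderiv ℝ φ z Complex.I)

/-- The Wirtinger derivative `∂_z̄ = ½(∂/∂x + i ∂/∂y)` of a complex-valued function on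
`ℂ ≃ ℝ²`, computed via the real Fréchet derivative. -/
noncomputable def dzbar (φ : ℂ → ℂ) (z : ℂ) : ℂ :=
  (1 / 2 : ℂ) * (fderiv ℝ φ z 1 + Complex.I * fderiv ℝ φ z Complex.I)

open Complex ComplexConjugate

section Wirtinger

variable {ψ : ℂ → ℝ} {z : ℂ}

lemma fderiv_ofReal_comp_apply (hψ : DifferentiableAt ℝ ψ z) (v : ℂ) :
    fderiv ℝ (fun w => (ψ w : ℂ)) z v = fderiv ℝ ψ z v :=
  congrArg (fun L : ℂ →L[ℝ] ℂ => L v) (ofRealCLM.hasFDerivAt.comp z hψ.hasFDerivAt).fderiv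

lemma dzbar_ofReal_comp (hψ : DifferentiableAt ℝ ψ z) :
    dzbar (fun w => (ψ w : ℂ)) z = conj (dzW (fun w => (ψ w : ℂ)) z) := by
  simp only [dzbar, dzW, fderiv_ofReal_comp_apply hψ, map_mul, map_sub, map_div₀, map_one,
    map_ofNat, conj_ofReal, conj_I]
  ring

lemma dzW_ofReal_comp_comp {g : ℝ → ℝ} {g' : ℝ} (hg : HasDerivAt g g' (ψ z))
    (hψ : DifferentiableAt ℝ ψ z) :
    dzW (fun w => (g (ψ w) : ℂ)) z = g' * dzW (fun w => (ψ w : ℂ)) z := by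
  have hgψ : DifferentiableAt ℝ (fun w => g (ψ w)) z := hg.differentiableAt.comp z hψ
  have hchain (v : ℂ) : fderiv ℝ (fun w => g (ψ w)) z v = g' * fderiv ℝ ψ z v := by
    rw [fderiv_fun_comp z hg.differentiableAt hψ, hg.hasFDerivAt.fderiv]
    simp [mul_comm]
  simp only [dzW, fderiv_ofReal_comp_apply hψ, fderiv_ofReal_comp_apply hgψ, hchain]
  push_cast
  ring

end Wirtinger

lemma hasDerivAt_log_add_div_sub {C t : ℝ} (ht : |t| < C) :
    HasDerivAt (fun s => 1 / (2 * C) * Real.log ((C + s) / (C - s))) (1 / (C ^ 2 - t ^ 2)) t := by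
  obtain ⟨hlo, hhi⟩ := abs_lt.mp ht
  have hadd : 0 < C + t := by linarith
  have hsub : 0 < C - t := by linarith
  have hquot := ((hasDerivAt_id' t).const_add C).div ((hasDerivAt_id' t).const_sub C) hsub.ne'
  refine ((hquot.log (div_pos hadd hsub).ne').const_mul (1 / (2 * C))).congr_deriv ?_
  have hC : C ≠ 0 := by linarith
  rw [Pi.div_apply, show C ^ 2 - t ^ 2 = (C + t) * (C - t) by ring]
  field_simp
  ring

theorem stmt_12_general (U : Set ℂ) (hU : IsOpen U) (C : ℝ)
    (φ : ℂ → ℝ) (hφdiff : DifferentiableOn ℝ φ U) (hφ : ∀ z ∈ U, |φ z| < C)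
    (F : ℂ → ℂ)
    (hdz : ∀ z ∈ U, dzW (fun w => ((φ w : ℝ) : ℂ)) z = ((C ^ 2 - φ z ^ 2 : ℝ) : ℂ) / F z) :
    ∀ z ∈ U,
      dzW (fun w =>
        ((1 / (2 * C) * Real.log ((C + φ w) / (C - φ w)) : ℝ) : ℂ)) z = 1 / F z ∧
      dzbar (fun w =>
        ((1 / (2 * C) * Real.log ((C + φ w) / (C - φ w)) : ℝ) : ℂ)) z
        = 1 / (starRingEnd ℂ) (F z) := by
  intro z hz
  have hφz : DifferentiableAt ℝ φ z := (hφdiff z hz).differentiableAt (hU.mem_nhds hz)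
  have hg := hasDerivAt_log_add_div_sub (hφ z hz)
  have hne : ((C ^ 2 - φ z ^ 2 : ℝ) : ℂ) ≠ 0 := by
    obtain ⟨hlo, hhi⟩ := abs_lt.mp (hφ z hz)
    exact_mod_cast (by nlinarith : C ^ 2 - φ z ^ 2 ≠ 0)
  have hdzh : dzW (fun w => ((1 / (2 * C) * Real.log ((C + φ w) / (C - φ w)) : ℝ) : ℂ)) z
      = 1 / F z := by
    rw [dzW_ofReal_comp_comp hg hφz, hdz z hz, ofReal_div, ofReal_one]
    field_simp
  refine ⟨hdzh, ?_⟩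
  have hh : DifferentiableAt ℝ (fun w => 1 / (2 * C) * Real.log ((C + φ w) / (C - φ w))) z :=
    hg.differentiableAt.comp z hφz
  rw [dzbar_ofReal_comp hh, hdzh, map_div₀, map_one]

/-- Let `U ⊆ ℂ` be open, `C > 0`, `φ : U → ℝ` real-differentiable with
`|φ| < C`, and `F` nonvanishing with `∂_zφ = (C² - φ²)/F` on `U`. Then
`h = (1/(2C))·log((C + φ)/(C - φ))` satisfies `∂_z h = 1/F` and `∂_z̄ h = 1/conj(F)` on `U`;
consequently `dh = 2 Re(dz/F)`, i.e. the real part of the one-form `dz/F` is exact on `U`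
with primitive `h`. -/
theorem stmt_12 (U : Set ℂ) (hU : IsOpen U) (C : ℝ) (hC : 0 < C)
    (φ : ℂ → ℝ) (hφdiff : DifferentiableOn ℝ φ U) (hφ : ∀ z ∈ U, |φ z| < C)
    (F : ℂ → ℂ) (hF : ∀ z ∈ U, F z ≠ 0)
    (hdz : ∀ z ∈ U, dzW (fun w => ((φ w : ℝ) : ℂ)) z = ((C ^ 2 - φ z ^ 2 : ℝ) : ℂ) / F z) :
    ∀ z ∈ U,
      dzW (fun w =>
        ((1 / (2 * C) * Real.log ((C + φ w) / (C - φ w)) : ℝ) : ℂ)) z = 1 / F z ∧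
      dzbar (fun w =>
        ((1 / (2 * C) * Real.log ((C + φ w) / (C - φ w)) : ℝ) : ℂ)) z
        = 1 / (starRingEnd ℂ) (F z) :=
  stmt_12_general U hU C φ hφdiff hφ F hdz
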